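/- Let G be a finite bipartite graph with left vertex set U of size m ≥ 1 and right vertex set V of size n ≥ 1, with no isolated vertices, and let k be an odd positive integer. Then the number |𝒫_k| of walks of length k in G (where edges may be repeated) satisfies |𝒫_k| ≥ |E(G)|^k / (mn)^{(k-1)/2}. -/

import Mathlib

/-- The bipartite graph on `U ⊕ V` determined by the relation `R : U → V → Prop`:
a left vertex `u` is adjacent to a right vertex `v` iff `R u v`, and there are no
edges within `U` or within `V`. -/
def bipGraph {U V : Type*} (R : U → V → Prop) : SimpleGraph (U ⊕ V) where
  Adj x y :=
    Sum.elim (fun u => Sum.elim (fun _ => False) (fun v => R u v))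
      (fun v => Sum.elim (fun u => R u v) (fun _ => False)) x y
  symm := ⟨by rintro (u | v) (u' | v') h <;> simp_all⟩
  loopless := ⟨by rintro (u | v) h <;> exact h⟩

/-- The degree of the left vertex `u`. -/
def degL {U V : Type*} [Fintype V] (R : U → V → Prop) [∀ u v, Decidable (R u v)] (u : U) : ℕ :=
  (Finset.univ.filter fun v => R u v).card

/-- The degree of the right vertex `v`. -/
def degR {U V : Type*} [Fintype U] (R : U → V → Prop) [∀ u v, Decidable (R u v)] (v : V) : ℕ :=
  (Finset.univ.filter fun u => R u v).card

/-- The number of edges of the bipartite graph. -/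
def edgeCount {U V : Type*} [Fintype U] [Fintype V] (R : U → V → Prop)
    [∀ u v, Decidable (R u v)] : ℕ :=
  (Finset.univ.filter fun p : U × V => R p.1 p.2).card

/-- The number of walks of length `k` in the bipartite graph (sequences of `k + 1`
vertices, each adjacent to the next; vertices and edges may be repeated). -/
noncomputable def walkCount {U V : Type*} [Fintype U] [Fintype V]
    (R : U → V → Prop) (k : ℕ) : ℕ :=
  ∑ x : U ⊕ V, ∑ y : U ⊕ V, Nat.card {w : (bipGraph R).Walk x y // w.length = k}

/-- The Shannon entropy (in nats) of a probability mass function `p` on a finite set,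
with the convention `0 · log 0 = 0` (automatic in Lean since `Real.log 0 = 0`). -/
noncomputable def entPMF {α : Type*} [Fintype α] (p : α → ℝ) : ℝ :=
  -∑ a, p a * Real.log (p a)


/-!
Let `f(v)` be the number of walks of length `2j + 1` that start in `U` and end at `v ∈ V`.
Jensen's inequality for `log`, applied once on each side of the graph, shows that extending
the walks by two steps raises `∑ᵥ d(v) log f(v)` by at least
`∑ᵤ d(u) log d(u) + ∑ᵥ d(v) log d(v) ≥ |E| log (|E|² / mn)`. The log-sum inequality with
weights `d(v)` then turns the resulting bound on `∑ᵥ d(v) log f(v)` into one on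
`log ∑ᵥ f(v)`.
-/

open Finset Real Matrix

/-- The log-sum inequality `A log (A / B) ≤ ∑ aᵢ log (aᵢ / bᵢ)`, cleared of divisions. -/
theorem mul_log_add_sum_mul_log_le {ι : Type*} (s : Finset ι) (a b : ι → ℝ)
    (ha : ∀ i ∈ s, 0 ≤ a i) (hb : ∀ i ∈ s, 0 < b i) :
    (∑ i ∈ s, a i) * log (∑ i ∈ s, a i) + ∑ i ∈ s, a i * log (b i)
      ≤ ∑ i ∈ s, a i * log (a i) + (∑ i ∈ s, a i) * log (∑ i ∈ s, b i) := by
  rcases (sum_nonneg ha).eq_or_lt with hA | hA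
  · have hzero (f : ι → ℝ) : ∑ i ∈ s, a i * f i = 0 :=
      sum_eq_zero fun i hi => by rw [(sum_eq_zero_iff_of_nonneg ha).1 hA.symm i hi, zero_mul]
    simp [hzero, ← hA]
  set A := ∑ i ∈ s, a i
  set B := ∑ i ∈ s, b i
  have hB : 0 < B := sum_pos hb (nonempty_of_sum_ne_zero hA.ne')
  have key : ∀ i ∈ s, a i * log (b i) - a i * log (a i) + a i * (log A - log B)
      ≤ b i * (A / B) - a i := by
    intro i hi
    have hbi := hb i hi
    rcases (ha i hi).eq_or_lt with hai | hai
    · simp only [← hai, zero_mul, sub_zero, add_zero, sub_self]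
      positivity
    have hx := log_le_sub_one_of_pos (x := b i * A / (a i * B)) (by positivity)
    rw [log_div (by positivity) (by positivity), log_mul hbi.ne' hA.ne',
      log_mul hai.ne' hB.ne'] at hx
    have hmul := mul_le_mul_of_nonneg_left hx hai.le
    have hrhs : a i * (b i * A / (a i * B) - 1) = b i * (A / B) - a i := by field_simp
    linarith
  have hsum := sum_le_sum key
  simp only [sum_add_distrib, sum_sub_distrib, ← sum_mul] at hsum
  have hBA : B * (A / B) = A := mul_div_cancel₀ A hB.ne'
  linarith

section Degrees

variable {U V : Type*} [Fintype U] [Fintype V] (R : U → V → Prop) [∀ u v, Decidable (R u v)]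

theorem sum_degL_eq_edgeCount : ∑ u, degL R u = edgeCount R := by
  rw [edgeCount, ← univ_product_univ, card_filter, sum_product]
  exact sum_congr rfl fun u _ => (card_filter _ _)

theorem sum_degR_eq_edgeCount : ∑ v, degR R v = edgeCount R := by
  rw [edgeCount, ← univ_product_univ, card_filter, sum_product, sum_comm]
  exact sum_congr rfl fun v _ => (card_filter _ _)

theorem sum_sum_filter_eq_sum_degL_mul (F : U → ℝ) :
    ∑ v, ∑ u with R u v, F u = ∑ u, (degL R u : ℝ) * F u := by
  simp only [sum_filter]
  rw [sum_comm]
  refine sum_congr rfl fun u _ => ?_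
  rw [← sum_filter, sum_const, nsmul_eq_mul, degL]

theorem sum_mul_log_sum_le_sum_mul_log_add {ι : Type*} [Fintype ι] (w : ι → ℕ) :
    ((∑ i, w i : ℕ) : ℝ) * log (∑ i, w i : ℕ)
      ≤ ∑ i, (w i : ℝ) * log (w i) + ((∑ i, w i : ℕ) : ℝ) * log (Fintype.card ι) := by
  simpa using mul_log_add_sum_mul_log_le univ (fun i => (w i : ℝ)) 1 (fun i _ => by positivity)
    (fun _ _ => one_pos)

theorem sum_degR_mul_log_add_sum_degL_mul_log_le (g : U → ℝ) (hg : ∀ u, 0 < g u) :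
    ∑ v, (degR R v : ℝ) * log (degR R v) + ∑ u, (degL R u : ℝ) * log (g u)
      ≤ ∑ v, (degR R v : ℝ) * log (∑ u with R u v, g u) := by
  rw [← sum_sum_filter_eq_sum_degL_mul, ← sum_add_distrib]
  refine sum_le_sum fun v _ => ?_
  simpa [degR] using mul_log_add_sum_mul_log_le {u | R u v} 1 g (fun _ _ => zero_le_one)
    (fun u _ => hg u)

end Degrees

section Walks

variable {U V : Type*} [Fintype U] [Fintype V] (R : U → V → Prop) [∀ u v, Decidable (R u v)]

instance : DecidableRel (bipGraph R).Adj
  | .inl _, .inl _ => isFalse id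
  | .inl u, .inr v => inferInstanceAs (Decidable (R u v))
  | .inr v, .inl u => inferInstanceAs (Decidable (R u v))
  | .inr _, .inr _ => isFalse id

def walksEndingAt : ℕ → U ⊕ V → ℕ
  | 0, _ => 1
  | t + 1, .inl u => ∑ v with R u v, walksEndingAt t (.inr v)
  | t + 1, .inr v => ∑ u with R u v, walksEndingAt t (.inl u)

theorem walksEndingAt_pos (hisoL : ∀ u, ∃ v, R u v) (hisoR : ∀ v, ∃ u, R u v) :
    ∀ t x, 0 < walksEndingAt R t x
  | 0, _ => Nat.one_pos
  | t + 1, .inl u => by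
    obtain ⟨v, hv⟩ := hisoL u
    exact sum_pos' (fun _ _ => Nat.zero_le _)
      ⟨v, by simpa using hv, walksEndingAt_pos hisoL hisoR t _⟩
  | t + 1, .inr v => by
    obtain ⟨u, hu⟩ := hisoR v
    exact sum_pos' (fun _ _ => Nat.zero_le _)
      ⟨u, by simpa using hu, walksEndingAt_pos hisoL hisoR t _⟩

theorem walksEndingAt_eq_one_vecMul_adjMatrix_pow [DecidableEq U] [DecidableEq V] (t : ℕ) :
    walksEndingAt R t = 1 ᵥ* (bipGraph R).adjMatrix ℕ ^ t := by
  induction t with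
  | zero => ext x; simp [walksEndingAt]
  | succ t ih =>
    ext x
    rw [pow_succ, ← vecMul_vecMul, ← ih, SimpleGraph.adjMatrix_vecMul_apply,
      SimpleGraph.neighborFinset_eq_filter, sum_filter]
    -- the two sides differ only in the `Decidable` instances of the conditions
    cases x <;> simp [walksEndingAt, bipGraph, sum_filter] <;> rfl

theorem walkCount_eq_sum_walksEndingAt (t : ℕ) :
    walkCount R t = ∑ x, walksEndingAt R t x := by
  classical
  rw [walkCount, sum_comm, walksEndingAt_eq_one_vecMul_adjMatrix_pow]
  refine sum_congr rfl fun y _ => ?_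
  simp only [vecMul, dotProduct, Pi.one_apply, one_mul,
    SimpleGraph.adjMatrix_pow_apply_eq_card_walk]
  exact sum_congr rfl fun x _ => Nat.card_eq_fintype_card

end Walks

section Bound

variable {U V : Type*} [Fintype U] [Fintype V] (R : U → V → Prop) [∀ u v, Decidable (R u v)]

theorem sum_degR_mul_log_add_le_sum_degR_mul_log_walksEndingAt (hisoL : ∀ u, ∃ v, R u v)
    (hisoR : ∀ v, ∃ u, R u v) (j : ℕ) :
    ∑ v, (degR R v : ℝ) * log (degR R v)
        + j * (∑ u, (degL R u : ℝ) * log (degL R u) + ∑ v, (degR R v : ℝ) * log (degR R v))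
      ≤ ∑ v, (degR R v : ℝ) * log (walksEndingAt R (2 * j + 1) (.inr v)) := by
  have hpos (t : ℕ) (x : U ⊕ V) : (0 : ℝ) < walksEndingAt R t x := by
    exact_mod_cast walksEndingAt_pos R hisoL hisoR t x
  have step_inr (t : ℕ) :
      ∑ v, (degR R v : ℝ) * log (degR R v)
          + ∑ u, (degL R u : ℝ) * log (walksEndingAt R t (.inl u))
        ≤ ∑ v, (degR R v : ℝ) * log (walksEndingAt R (t + 1) (.inr v)) := by
    simp only [walksEndingAt, Nat.cast_sum]
    exact sum_degR_mul_log_add_sum_degL_mul_log_le R _ fun u => hpos t (.inl u)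
  have step_inl (t : ℕ) :
      ∑ u, (degL R u : ℝ) * log (degL R u)
          + ∑ v, (degR R v : ℝ) * log (walksEndingAt R t (.inr v))
        ≤ ∑ u, (degL R u : ℝ) * log (walksEndingAt R (t + 1) (.inl u)) := by
    simp only [walksEndingAt, Nat.cast_sum]
    exact sum_degR_mul_log_add_sum_degL_mul_log_le (fun v u => R u v) _ fun v => hpos t (.inr v)
  induction j with
  | zero => simpa [walksEndingAt] using step_inr 0
  | succ j ih =>
    rw [show 2 * (j + 1) + 1 = 2 * j + 1 + 1 + 1 by ring]
    push_cast
    linarith [step_inr (2 * j + 1 + 1), step_inl (2 * j + 1)]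

theorem edgeCount_pow_div_le_sum_walksEndingAt (hisoL : ∀ u, ∃ v, R u v)
    (hisoR : ∀ v, ∃ u, R u v) (j : ℕ) :
    (edgeCount R : ℝ) ^ (2 * j + 1) / ((Fintype.card U : ℝ) * Fintype.card V) ^ j
      ≤ ∑ v, (walksEndingAt R (2 * j + 1) (.inr v) : ℝ) := by
  rcases (Nat.zero_le (edgeCount R)).eq_or_lt with hE | hE
  · rw [← hE, Nat.cast_zero, zero_pow (by omega), zero_div]
    positivity
  obtain ⟨⟨u, v⟩, -⟩ := card_pos.1 hE
  replace hE : (0 : ℝ) < edgeCount R := by exact_mod_cast hE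
  set E : ℝ := (edgeCount R : ℝ)
  set W := ∑ v, (walksEndingAt R (2 * j + 1) (.inr v) : ℝ)
  have hW : 0 < W := sum_pos (fun v _ => by exact_mod_cast walksEndingAt_pos R hisoL hisoR _ _)
    ⟨v, mem_univ v⟩
  have hm : (0 : ℝ) < Fintype.card U := by exact_mod_cast Fintype.card_pos_iff.2 ⟨u⟩
  have hn : (0 : ℝ) < Fintype.card V := by exact_mod_cast Fintype.card_pos_iff.2 ⟨v⟩
  have hdegL := sum_mul_log_sum_le_sum_mul_log_add (degL R)
  have hdegR := sum_mul_log_sum_le_sum_mul_log_add (degR R)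
  rw [sum_degL_eq_edgeCount] at hdegL
  rw [sum_degR_eq_edgeCount] at hdegR
  have hlogSum := mul_log_add_sum_mul_log_le univ (fun v => (degR R v : ℝ))
    (fun v => walksEndingAt R (2 * j + 1) (.inr v)) (fun _ _ => by positivity)
    (fun v _ => by exact_mod_cast walksEndingAt_pos R hisoL hisoR _ _)
  rw [← Nat.cast_sum, sum_degR_eq_edgeCount] at hlogSum
  have hwalks := sum_degR_mul_log_add_le_sum_degR_mul_log_walksEndingAt R hisoL hisoR j
  have hj : (0 : ℝ) ≤ j := j.cast_nonneg
  have hlog : E * ((2 * j + 1) * log E - j * (log (Fintype.card U) + log (Fintype.card V)))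
      ≤ E * log W := by
    linarith [mul_le_mul_of_nonneg_left hdegL hj, mul_le_mul_of_nonneg_left hdegR hj]
  rw [← log_le_log_iff (by positivity) hW, log_div (by positivity) (by positivity), log_pow,
    log_pow, log_mul hm.ne' hn.ne']
  push_cast
  linarith [le_of_mul_le_mul_left hlog hE]

end Bound

theorem walks_cardinality_lower_bound_odd_general {U V : Type*} [Fintype U] [Fintype V]
    (R : U → V → Prop) [∀ u v, Decidable (R u v)]
    (hisoL : ∀ u : U, ∃ v : V, R u v) (hisoR : ∀ v : V, ∃ u : U, R u v)
    (k : ℕ) (hk : Odd k) :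
    (edgeCount R : ℝ) ^ k / ((Fintype.card U * Fintype.card V : ℕ) : ℝ) ^ ((k - 1) / 2)
      ≤ (walkCount R k : ℝ) := by
  obtain ⟨j, rfl⟩ := hk
  rw [show (2 * j + 1 - 1) / 2 = j by omega, walkCount_eq_sum_walksEndingAt,
    Fintype.sum_sum_type]
  push_cast
  calc _ ≤ ∑ v, (walksEndingAt R (2 * j + 1) (.inr v) : ℝ) :=
        edgeCount_pow_div_le_sum_walksEndingAt R hisoL hisoR j
    _ ≤ _ := le_add_of_nonneg_left (by positivity)

/-- Lower bound on the number of walks of odd length `k` in a finite bipartite graph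
with sides of sizes `m, n ≥ 1` and no isolated vertices:
`|𝒫_k| ≥ |E(G)|^k / (m·n)^((k-1)/2)`. -/
theorem walks_cardinality_lower_bound_odd {U V : Type*} [Fintype U] [Fintype V]
    (R : U → V → Prop) [∀ u v, Decidable (R u v)]
    (hU : 0 < Fintype.card U) (hV : 0 < Fintype.card V)
    (hisoL : ∀ u : U, ∃ v : V, R u v) (hisoR : ∀ v : V, ∃ u : U, R u v)
    (k : ℕ) (hk0 : 0 < k) (hk : Odd k) :
    (edgeCount R : ℝ) ^ k / ((Fintype.card U * Fintype.card V : ℕ) : ℝ) ^ ((k - 1) / 2)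
      ≤ (walkCount R k : ℝ) :=
  walks_cardinality_lower_bound_odd_general R hisoL hisoR k hk
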